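/- For every ε in (0,1) and Λ ≥ 1, if M ≥ eΛ + 2·log(1/ε) and M ≥ 1, then Λ^M / M! ≤ ε. -/

import Mathlib

/-! The term `n^n/n!` of the series of `e^n` is at most `e^n`; this gives `Λ^M / M! ≤ (eΛ/M)^M`, and `log t ≤ t - 1` turns
this into `(eΛ/M)^M ≤ exp (eΛ - M)`, which is at most `exp (-2 log (1/ε)) ≤ ε`. -/

open Real

lemma pow_div_factorial_le_exp_mul_div_pow {x : ℝ} (hx : 0 ≤ x) (n : ℕ) :
    x ^ n / n.factorial ≤ (exp 1 * x / n) ^ n := by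
  rcases n.eq_zero_or_pos with rfl | hn
  · simp
  have hstirling : (n : ℝ) ^ n ≤ exp n * n.factorial := by
    have := pow_div_factorial_le_exp (n : ℝ) (Nat.cast_nonneg n) n
    rwa [div_le_iff₀ (by positivity)] at this
  rw [div_pow, mul_pow, ← exp_nat_mul, mul_one, div_le_div_iff₀ (by positivity) (by positivity)]
  calc x ^ n * (n : ℝ) ^ n ≤ x ^ n * (exp n * n.factorial) := by gcongr
    _ = exp n * x ^ n * n.factorial := by ring

lemma div_pow_le_exp_sub {y : ℝ} (hy : 0 ≤ y) (n : ℕ) : (y / n) ^ n ≤ exp (y - n) := by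
  rcases n.eq_zero_or_pos with rfl | hn
  · simpa using one_le_exp hy
  have hn' : (n : ℝ) ≠ 0 := by positivity
  calc (y / n) ^ n ≤ exp (y / n - 1) ^ n := by
        gcongr
        linarith [add_one_le_exp (y / n - 1)]
    _ = exp (y - n) := by
        rw [← exp_nat_mul]
        congr 1
        field_simp

theorem cheb_node_count_suffices_general (ε Λ : ℝ) (hε : ε ∈ Set.Ioo (0 : ℝ) 1) (hΛ : 1 ≤ Λ)
    (M : ℕ)
    (hM : Real.exp 1 * Λ + 2 * Real.log (1 / ε) ≤ (M : ℝ)) :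
    Λ ^ M / (Nat.factorial M : ℝ) ≤ ε := by
  obtain ⟨hε0, hε1⟩ := hε
  have hlog_nonneg : 0 ≤ log (1 / ε) := log_nonneg (by rw [le_div_iff₀ hε0]; linarith)
  have hΛ0 : 0 ≤ Λ := by linarith
  calc Λ ^ M / (M.factorial : ℝ) ≤ (exp 1 * Λ / M) ^ M := pow_div_factorial_le_exp_mul_div_pow hΛ0 M
    _ ≤ exp (exp 1 * Λ - M) := div_pow_le_exp_sub (by positivity) M
    _ ≤ exp (-log (1 / ε)) := exp_le_exp.mpr (by linarith)
    _ = ε := by rw [one_div, log_inv, neg_neg, exp_log hε0]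

theorem cheb_node_count_suffices (ε Λ : ℝ) (hε : ε ∈ Set.Ioo (0 : ℝ) 1) (hΛ : 1 ≤ Λ)
    (M : ℕ) (hM1 : 1 ≤ M)
    (hM : Real.exp 1 * Λ + 2 * Real.log (1 / ε) ≤ (M : ℝ)) :
    Λ ^ M / (Nat.factorial M : ℝ) ≤ ε :=
  cheb_node_count_suffices_general ε Λ hε hΛ M hM
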